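/- arXiv:2212.07469 — 4 statements merged into one kernel-verified Lean document; each statement's English description precedes it below -/
import Mathlib

section
/- Along the continuous-time gradient flow dA/dt = −2d² ℓ'(A g(b)) g(b), db/dt = −ℓ'(A g(b)) A g'(b), the quantity (1/2)A² − 2d² κ(b) is conserved, where κ(b) := ∫₀^b g(s)/g'(s) ds. -/
open Real

/-- Along the continuous-time mean-model gradient flow
`dA/dt = −2d² ℓ'(A g(b)) g(b)`, `db/dt = −ℓ'(A g(b)) A g'(b)`,
the quantity `(1/2)A² − 2d² κ(b)` is conserved, where `κ(b) = ∫₀^b g/g'`. -/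
theorem mean_model_gradient_flow_conserved
    (ℓ : ℝ → ℝ) (hℓ : Differentiable ℝ ℓ)
    (φ Φ g κ : ℝ → ℝ)
    (hφ : ∀ x, φ x = (2 * π) ^ (-(1:ℝ)/2) * Real.exp (-x ^ 2 / 2))
    (hΦ : ∀ b, Φ b = ∫ x in Set.Iic b, φ x)
    (hg : ∀ b, g b = φ b + b * Φ b)
    (hκ : ∀ b, κ b = ∫ s in (0:ℝ)..b, g s / Φ s)
    (d : ℝ) (hd : 0 < d)
    (A b : ℝ → ℝ)
    (hA : ∀ t, HasDerivAt A (-(2 * d ^ 2 * deriv ℓ (A t * g (b t)) * g (b t))) t)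
    (hb : ∀ t, HasDerivAt b (-(deriv ℓ (A t * g (b t)) * A t * Φ (b t))) t) :
    ∀ t, HasDerivAt (fun t => (1 / 2) * (A t) ^ 2 - 2 * d ^ 2 * κ (b t)) 0 t := by
  -- basic facts about φ
  have hφpos : ∀ x, 0 < φ x := by
    intro x
    rw [hφ x]
    positivity
  have hφcont : Continuous φ := by
    have : Continuous fun x : ℝ => (2 * π) ^ (-(1:ℝ)/2) * Real.exp (-x ^ 2 / 2) := by
      continuity
    simpa [funext hφ] using this
  have hφint : MeasureTheory.Integrable φ := by
    have h0 : MeasureTheory.Integrable fun x : ℝ => Real.exp (-(1/2 : ℝ) * x ^ 2) :=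
      integrable_exp_neg_mul_sq (by norm_num)
    have h1 : MeasureTheory.Integrable fun x : ℝ =>
        (2 * π) ^ (-(1:ℝ)/2) * Real.exp (-(1/2 : ℝ) * x ^ 2) := h0.const_mul _
    have : (fun x : ℝ => (2 * π) ^ (-(1:ℝ)/2) * Real.exp (-(1/2 : ℝ) * x ^ 2)) = φ := by
      funext x; rw [hφ x]; ring_nf
    rwa [this] at h1
  -- Φ is continuous
  have hΦeq : ∀ x, Φ x = Φ 0 + ∫ s in (0:ℝ)..x, φ s := by
    intro x
    rw [hΦ x, hΦ 0, ← intervalIntegral.integral_Iic_sub_Iic hφint.integrableOn hφint.integrableOn]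
    ring
  have hprim : ∀ x, HasDerivAt (fun u => ∫ s in (0:ℝ)..u, φ s) (φ x) x := fun x =>
    (hφcont.integral_hasStrictDerivAt 0 x).hasDerivAt
  have hΦcont : Continuous Φ := by
    have h1 : Continuous fun x : ℝ => Φ 0 + ∫ s in (0:ℝ)..x, φ s :=
      continuous_const.add (continuous_iff_continuousAt.2 fun x => (hprim x).continuousAt)
    have : (fun x : ℝ => Φ 0 + ∫ s in (0:ℝ)..x, φ s) = Φ := by
      funext x; rw [← hΦeq x]
    rwa [this] at h1
  -- Φ is positive
  have hΦpos : ∀ x, 0 < Φ x := by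
    intro x
    rw [hΦ x]
    have := MeasureTheory.setIntegral_pos_iff_support_of_nonneg_ae
      (μ := MeasureTheory.volume) (s := Set.Iic x)
      (Filter.Eventually.of_forall fun y => (hφpos y).le) hφint.integrableOn
    rw [this]
    have : Function.support φ = Set.univ := by
      ext y; simp [Function.mem_support, (hφpos y).ne']
    rw [this]
    simp [Real.volume_Iic]
  -- g is continuous
  have hgcont : Continuous g := by
    have h1 : Continuous fun x : ℝ => φ x + x * Φ x := by
      exact hφcont.add (continuous_id.mul hΦcont)
    have : (fun x : ℝ => φ x + x * Φ x) = g := by funext x; rw [hg x]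
    rwa [this] at h1
  -- derivative of κ
  have hhcont : Continuous fun s => g s / Φ s := hgcont.div hΦcont fun x => (hΦpos x).ne'
  have hκd : ∀ x, HasDerivAt κ (g x / Φ x) x := by
    intro x
    have h1 := (hhcont.integral_hasStrictDerivAt 0 x).hasDerivAt
    have : (fun u => ∫ s in (0:ℝ)..u, g s / Φ s) = κ := by funext u; rw [hκ u]
    rwa [this] at h1
  -- main computation
  intro t
  set L := deriv ℓ (A t * g (b t)) with hL
  have hκb : HasDerivAt (fun t => κ (b t))
      (g (b t) / Φ (b t) * -(L * A t * Φ (b t))) t := (hκd (b t)).comp t (hb t)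
  have hmain := (((hA t).pow 2).const_mul ((1:ℝ)/2)).sub (hκb.const_mul (2 * d ^ 2))
  refine hmain.congr_deriv ?_
  have hΦne : Φ (b t) ≠ 0 := (hΦpos (b t)).ne'
  rw [← hL, show (2 - 1 : ℕ) = 1 from rfl, pow_one]
  linear_combination (2 * d ^ 2 * g (b t) * L * A t) * mul_inv_cancel₀ hΦne
end

section
/- For gradient descent x_{t+1} = x_t − η ℓ'(x_t y_t) y_t, y_{t+1} = y_t − η ℓ'(x_t y_t) x_t with ℓ convex, even, |ℓ'(s)| ≤ |s|, suppose at iteration 𝔱 we have y_{𝔱+1}² < 2/η ≤ y_𝔱². Then y_{𝔱+1}² ≥ 2/η − 2η (x_𝔱 y_𝔱)². -/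
theorem mul_le_sq_of_abs_le_abs {a s : ℝ} (h : |a| ≤ |s|) : a * s ≤ s ^ 2 :=
  calc a * s ≤ |a * s| := le_abs_self _
    _ = |a| * |s| := abs_mul a s
    _ ≤ |s| * |s| := mul_le_mul_of_nonneg_right h (abs_nonneg s)
    _ = s ^ 2 := by rw [abs_mul_abs_self, sq]

theorem sq_sub_le_sq_update {η g x y : ℝ} (hη : 0 ≤ η) (hg : g * (x * y) ≤ (x * y) ^ 2) :
    y ^ 2 - 2 * η * (x * y) ^ 2 ≤ (y - η * g * x) ^ 2 :=
  calc y ^ 2 - 2 * η * (x * y) ^ 2 ≤ y ^ 2 - 2 * η * (g * (x * y)) := by gcongr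
    _ ≤ y ^ 2 - 2 * η * (g * (x * y)) + (η * g * x) ^ 2 := le_add_of_nonneg_right (sq_nonneg _)
    _ = (y - η * g * x) ^ 2 := by ring

theorem initial_gap_at_crossing_general
    (ℓ : ℝ → ℝ)
    (hbound : ∀ s, |deriv ℓ s| ≤ |s|)
    (η x y : ℝ) (hη : 0 < η)
    (hcross : (y - η * deriv ℓ (x * y) * x) ^ 2 < 2 / η ∧ 2 / η ≤ y ^ 2) :
    (y - η * deriv ℓ (x * y) * x) ^ 2 ≥ 2 / η - 2 * η * (x * y) ^ 2 := by
  have hstep := sq_sub_le_sq_update hη.le (mul_le_sq_of_abs_le_abs (hbound (x * y)))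
  linarith [hcross.2]

/-- If at the crossing iteration `𝔱` we have `y_{𝔱+1}² < 2/η ≤ y_𝔱²`, then
`y_{𝔱+1}² ≥ 2/η − 2η(x_𝔱 y_𝔱)²`. -/
theorem initial_gap_at_crossing
    (ℓ : ℝ → ℝ)
    (hconv : ConvexOn ℝ Set.univ ℓ)
    (heven : ∀ s, ℓ (-s) = ℓ s)
    (hbound : ∀ s, |deriv ℓ s| ≤ |s|)
    (η x y : ℝ) (hη : 0 < η)
    (hcross : (y - η * deriv ℓ (x * y) * x) ^ 2 < 2 / η ∧ 2 / η ≤ y ^ 2) :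
    (y - η * deriv ℓ (x * y) * x) ^ 2 ≥ 2 / η - 2 * η * (x * y) ^ 2 :=
  initial_gap_at_crossing_general ℓ hbound η x y hη hcross
end

section
/- Consider the mean model with step size η = (8−δ)π/d² for 0 < δ < 8, initialized at (A₀, 0) with A₀ > 0, and let γ = (1/200) min{δ, 8−δ, (8−δ)/A₀}. If η ≤ γ/A₀ and b_t ≥ −1 and g(b_t) > 0.08 hold (as established inductively), then whenever |A_t| ≤ A₀ e^{−γt}, the next iterate satisfies |A_{t+1}| ≤ A₀ e^{−γ(t+1)}; consequently the limiting bias satisfies 0 ≥ b_∞ ≥ −ηA₀/γ. -/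
open Real

noncomputable def Lp (s : ℝ) : ℝ := (Real.exp s - 1) / (2 * (Real.exp s + 1))

lemma Lp_odd (s : ℝ) : Lp (-s) = - Lp s := by
  have h := Real.exp_pos s
  have h2 : (0:ℝ) < rexp s + 1 := by linarith
  simp only [Lp, Real.exp_neg]
  rw [neg_div', div_eq_div_iff (by positivity) (by positivity)]
  have hi : (rexp s)⁻¹ * rexp s = 1 := inv_mul_cancel₀ (ne_of_gt h)
  linear_combination 4*hi

lemma Lp_zero : Lp 0 = 0 := by simp [Lp]

lemma Lp_nonneg {s : ℝ} (hs : 0 ≤ s) : 0 ≤ Lp s := by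
  have h := Real.one_le_exp hs
  unfold Lp
  apply div_nonneg (by linarith)
  nlinarith

lemma Lp_le_half (s : ℝ) : Lp s ≤ 1/2 := by
  have h := Real.exp_pos s
  unfold Lp
  rw [div_le_iff₀ (by linarith)]
  nlinarith

lemma Lp_abs_le (s : ℝ) : |Lp s| ≤ 1/2 := by
  rcases le_or_gt 0 s with h | h
  · rw [abs_of_nonneg (Lp_nonneg h)]; exact Lp_le_half s
  · have : Lp s = - Lp (-s) := by rw [Lp_odd]; ring
    rw [this, abs_neg, abs_of_nonneg (Lp_nonneg (by linarith))]
    exact Lp_le_half _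

lemma aux_mono1 {s : ℝ} (hs : 0 ≤ s) : 2*(Real.exp s - 1) ≤ s * (Real.exp s + 1) := by
  set f : ℝ → ℝ := fun x => x * (Real.exp x + 1) - 2*(Real.exp x - 1) with hf
  have hder : ∀ x : ℝ, HasDerivAt f ((Real.exp x + 1) + x * Real.exp x - 2 * Real.exp x) x := by
    intro x
    have h1 : HasDerivAt (fun x : ℝ => x * (Real.exp x + 1))
        (1 * (Real.exp x + 1) + x * Real.exp x) x :=
      (hasDerivAt_id x).mul ((Real.hasDerivAt_exp x).add_const 1)
    have h2 : HasDerivAt (fun x : ℝ => 2*(Real.exp x - 1)) (2 * Real.exp x) x :=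
      ((Real.hasDerivAt_exp x).sub_const 1).const_mul 2
    have := h1.sub h2
    exact this.congr_deriv (by ring)
  have hmono : MonotoneOn f (Set.Ici 0) := by
    apply monotoneOn_of_deriv_nonneg (convex_Ici 0)
    · exact (Continuous.continuousOn (by continuity))
    · intro x _
      exact (hder x).differentiableAt.differentiableWithinAt
    · intro x hx
      rw [(hder x).deriv]
      rw [interior_Ici] at hx
      have hxe : Real.exp (-x) * Real.exp x = 1 := by rw [← Real.exp_add]; simp
      nlinarith [Real.add_one_le_exp (-x), Real.exp_pos x]
  have h0 : f 0 ≤ f s := hmono (by simp) hs hs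
  simp only [hf] at h0
  norm_num at h0
  linarith

lemma Lp_le_quarter {s : ℝ} (hs : 0 ≤ s) : Lp s ≤ s/4 := by
  have h := Real.exp_pos s
  unfold Lp
  rw [div_le_div_iff₀ (by linarith) (by norm_num)]
  nlinarith [aux_mono1 hs]

lemma aux_mono2 {s : ℝ} (h0 : 0 ≤ s) (h2 : s ≤ 2) : s * (Real.exp s + 1) ≤ 4*(Real.exp s - 1) := by
  set f : ℝ → ℝ := fun x => 4*(Real.exp x - 1) - x * (Real.exp x + 1) with hf
  have hder : ∀ x : ℝ, HasDerivAt f (4 * Real.exp x - ((Real.exp x + 1) + x * Real.exp x)) x := by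
    intro x
    have h1 : HasDerivAt (fun x : ℝ => x * (Real.exp x + 1))
        (1 * (Real.exp x + 1) + x * Real.exp x) x :=
      (hasDerivAt_id x).mul ((Real.hasDerivAt_exp x).add_const 1)
    have h2 : HasDerivAt (fun x : ℝ => 4*(Real.exp x - 1)) (4 * Real.exp x) x :=
      ((Real.hasDerivAt_exp x).sub_const 1).const_mul 4
    have := h2.sub h1
    exact this.congr_deriv (by ring)
  have hmono : MonotoneOn f (Set.Icc 0 2) := by
    apply monotoneOn_of_deriv_nonneg (convex_Icc 0 2)
    · exact (Continuous.continuousOn (by continuity))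
    · intro x _
      exact (hder x).differentiableAt.differentiableWithinAt
    · intro x hx
      rw [(hder x).deriv]
      rw [interior_Icc] at hx
      have h1 := Real.one_le_exp (le_of_lt hx.1)
      nlinarith [hx.1.le, hx.2.le]
  have h0 : f 0 ≤ f s := hmono (by constructor <;> norm_num) ⟨h0, h2⟩ h0
  simp only [hf] at h0
  norm_num at h0
  linarith

lemma Lp_ge_eighth {s : ℝ} (h0 : 0 ≤ s) (h2 : s ≤ 2) : s/8 ≤ Lp s := by
  have h := Real.exp_pos s
  unfold Lp
  rw [div_le_div_iff₀ (by norm_num) (by linarith)]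
  nlinarith [aux_mono2 h0 h2]

lemma Lp_ge_quarter {s : ℝ} (h : 2 ≤ s) : 1/4 ≤ Lp s := by
  have he : (3:ℝ) ≤ Real.exp s :=
    le_trans (by nlinarith [Real.add_one_le_exp (2:ℝ)]) (Real.exp_le_exp.2 h)
  have h2 : (0:ℝ) < Real.exp s + 1 := by linarith
  unfold Lp
  rw [div_le_div_iff₀ (by norm_num) (by linarith)]
  nlinarith

lemma Lp_mul_nonneg (x c : ℝ) (hc : 0 ≤ c) : 0 ≤ Lp (x*c) * x := by
  rcases le_or_gt 0 x with h | h
  · exact mul_nonneg (Lp_nonneg (mul_nonneg h hc)) h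
  · have h1 : Lp (x*c) = - Lp (-(x*c)) := by rw [Lp_odd]; ring
    rw [h1]
    have h2 : 0 ≤ Lp (-(x*c)) := Lp_nonneg (by nlinarith)
    nlinarith

set_option maxHeartbeats 2000000 in
lemma keystep {δ γ g₀ a A₀ : ℝ} (hδ : 0 < δ) (hδ8 : δ < 8)
    (hγ : 0 < γ) (hγδ : γ ≤ δ/200) (hγ8 : γ ≤ (8-δ)/200) (hγA : γ * A₀ ≤ (8-δ)/200)
    (hg1 : 0.08 < g₀) (hg2 : g₀^2 ≤ 1/(2*π))
    (ha : 0 < a) (haA : a ≤ A₀) :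
    |a - 2*(8-δ)*π * Lp (a*g₀) * g₀| ≤ (1-γ)*a := by
  have hπ := Real.pi_gt_d6
  have hπ4 := Real.pi_lt_d2
  have h8 : (0:ℝ) < 8 - δ := by linarith
  have hg0 : (0:ℝ) < g₀ := by linarith
  have hs : 0 < a * g₀ := mul_pos ha hg0
  have h2pi : 2*π*g₀^2 ≤ 1 := by
    rw [le_div_iff₀ (by positivity)] at hg2
    linarith
  have hγd4 : γ ≤ δ/4 := by linarith
  rw [abs_le]
  constructor
  · -- lower:  2(8-δ)π Lp g₀ ≤ (2-γ)a
    rcases le_or_gt (a * g₀) 2 with h | h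
    · have hA := Lp_le_quarter hs.le
      have hstep : 2*(8-δ)*π * Lp (a*g₀) * g₀ ≤ 2*(8-δ)*π * (a*g₀/4) * g₀ := by
        have hpos : (0:ℝ) ≤ 2*(8-δ)*π*g₀ :=
          mul_nonneg (mul_nonneg (by linarith) Real.pi_pos.le) hg0.le
        nlinarith [mul_le_mul_of_nonneg_left hA hpos]
      have h2 : 2*(8-δ)*π * (a*g₀/4) * g₀ ≤ (8-δ)/4 * a := by
        have hpos : (0:ℝ) ≤ (8-δ)*a/4 := by
          apply div_nonneg (mul_nonneg h8.le ha.le) (by norm_num)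
        nlinarith [mul_le_mul_of_nonneg_left h2pi hpos]
      nlinarith [mul_le_mul_of_nonneg_left hγd4 ha.le]
    · have hH := Lp_le_half (a*g₀)
      have hmul : (2*(8-δ)*π * Lp (a*g₀) * g₀) * g₀ ≤ ((2-γ)*a) * g₀ := by
        have h1 : (2*(8-δ)*π * Lp (a*g₀) * g₀) * g₀ ≤ (8-δ)*π*g₀^2 := by
          have hpos : (0:ℝ) ≤ 2*(8-δ)*π*g₀^2 :=
            mul_nonneg (mul_nonneg (by linarith) Real.pi_pos.le) (sq_nonneg g₀)
          nlinarith [mul_le_mul_of_nonneg_left hH hpos]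
        have h2 : (8-δ)*π*g₀^2 ≤ (8-δ)/2 := by
          have := mul_le_mul_of_nonneg_left h2pi (show (0:ℝ) ≤ (8-δ)/2 by linarith)
          nlinarith
        have h3 : 2*(2-γ) ≤ ((2-γ)*a)*g₀ := by
          have := mul_le_mul_of_nonneg_left h.le (show (0:ℝ) ≤ 2-γ by linarith)
          nlinarith
        linarith
      have := le_of_mul_le_mul_right hmul hg0
      linarith
  · -- upper: γ a ≤ 2(8-δ)π Lp g₀
    rcases le_or_gt (a * g₀) 2 with h | h
    · have hB := Lp_ge_eighth hs.le h
      have hgsq : (0.0064:ℝ) ≤ g₀^2 := by nlinarith [sq_nonneg (g₀ - 0.08)]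
      have hstep : 2*(8-δ)*π * (a*g₀/8) * g₀ ≤ 2*(8-δ)*π * Lp (a*g₀) * g₀ := by
        have hpos : (0:ℝ) ≤ 2*(8-δ)*π*g₀ :=
          mul_nonneg (mul_nonneg (by linarith) Real.pi_pos.le) hg0.le
        nlinarith [mul_le_mul_of_nonneg_left hB hpos]
      have h2 : γ * a ≤ (8-δ)/200 * a := mul_le_mul_of_nonneg_right hγ8 ha.le
      have hq : (1:ℝ)/200 ≤ π * g₀^2/4 := by
        nlinarith [mul_le_mul hπ.le hgsq (by norm_num) (by linarith : (0:ℝ) ≤ π)]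
      have h3 : (8-δ)/200 * a ≤ 2*(8-δ)*π * (a*g₀/8) * g₀ := by
        nlinarith [mul_nonneg (mul_nonneg ha.le h8.le) (show (0:ℝ) ≤ π*g₀^2/4 - 1/200 by linarith)]
      linarith
    · have hC := Lp_ge_quarter h.le
      have h1 : γ * a ≤ (8-δ)/200 := by
        have := mul_le_mul_of_nonneg_left haA hγ.le
        linarith
      have h2 : (8-δ)/200 ≤ 2*(8-δ)*π * (1/4) * 0.08 := by
        nlinarith [mul_nonneg h8.le (show (0:ℝ) ≤ 0.04*π - 1/200 by linarith)]
      have h3 : 2*(8-δ)*π * (1/4) * 0.08 ≤ 2*(8-δ)*π * Lp (a*g₀) * g₀ := by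
        have hpos : (0:ℝ) ≤ 2*(8-δ)*π := mul_nonneg (by linarith) Real.pi_pos.le
        have hLg : (1/4:ℝ) * 0.08 ≤ Lp (a*g₀) * g₀ :=
          mul_le_mul hC hg1.le (by norm_num) (by linarith [Lp_ge_quarter h.le])
        nlinarith [mul_le_mul_of_nonneg_left hLg hpos]
      linarith

lemma phi_integrable (φ : ℝ → ℝ) (hφ : ∀ x, φ x = (2*π)^(-(1:ℝ)/2) * Real.exp (-x^2/2)) :
    MeasureTheory.Integrable φ := by
  have hfe : φ = fun x => (2*π)^(-(1:ℝ)/2) * Real.exp (-(1/2) * x^2) := by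
    funext x; rw [hφ]; ring_nf
  rw [hfe]
  exact (integrable_exp_neg_mul_sq (by norm_num : (0:ℝ) < 1/2)).const_mul _

lemma coef_sqrt : (2*π)^(-(1:ℝ)/2) * Real.sqrt (2*π) = 1 := by
  have h1 : (-(1:ℝ))/2 = -(1/2) := by norm_num
  rw [h1, Real.rpow_neg (by positivity), ← Real.sqrt_eq_rpow]
  exact inv_mul_cancel₀ (ne_of_gt (Real.sqrt_pos.2 (by positivity)))

lemma phi_total (φ : ℝ → ℝ) (hφ : ∀ x, φ x = (2*π)^(-(1:ℝ)/2) * Real.exp (-x^2/2)) :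
    ∫ x, φ x = 1 := by
  have hfe : (fun x => φ x) = fun x => (2*π)^(-(1:ℝ)/2) * Real.exp (-(1/2) * x^2) := by
    funext x; rw [hφ]; ring_nf
  rw [hfe, MeasureTheory.integral_const_mul, integral_gaussian]
  have : π / (1/2 : ℝ) = 2*π := by ring
  rw [this]
  exact coef_sqrt

lemma Phi_zero (φ Φ : ℝ → ℝ) (hφ : ∀ x, φ x = (2*π)^(-(1:ℝ)/2) * Real.exp (-x^2/2))
    (hΦ : ∀ b, Φ b = ∫ x in Set.Iic b, φ x) : Φ 0 = 1/2 := by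
  have hint := phi_integrable φ hφ
  have hsym : ∫ x in Set.Iic (0:ℝ), φ x = ∫ x in Set.Ioi (0:ℝ), φ x := by
    have heven : ∀ x : ℝ, φ (-x) = φ x := by
      intro x; rw [hφ, hφ]; norm_num
    have h := integral_comp_neg_Iic (0:ℝ) φ
    simp only [heven, neg_zero] at h
    exact h
  have hsplit : (∫ x in Set.Iic (0:ℝ), φ x) + ∫ x in Set.Ioi (0:ℝ), φ x = ∫ x, φ x := by
    have := MeasureTheory.integral_add_compl (measurableSet_Iic (a := (0:ℝ))) hint
    rwa [Set.compl_Iic] at this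
  rw [phi_total φ hφ] at hsplit
  rw [hΦ]
  linarith [hsym ▸ hsplit]

lemma Phi_nonneg (φ Φ : ℝ → ℝ) (hφ : ∀ x, φ x = (2*π)^(-(1:ℝ)/2) * Real.exp (-x^2/2))
    (hΦ : ∀ b, Φ b = ∫ x in Set.Iic b, φ x) : ∀ b, 0 ≤ Φ b := by
  intro b
  rw [hΦ]
  apply MeasureTheory.setIntegral_nonneg measurableSet_Iic
  intro x _
  rw [hφ]; positivity

lemma Phi_le_half (φ Φ : ℝ → ℝ) (hφ : ∀ x, φ x = (2*π)^(-(1:ℝ)/2) * Real.exp (-x^2/2))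
    (hΦ : ∀ b, Φ b = ∫ x in Set.Iic b, φ x) : ∀ b ≤ 0, Φ b ≤ 1/2 := by
  intro b hb
  have hint := phi_integrable φ hφ
  have : Φ b ≤ Φ 0 := by
    rw [hΦ, hΦ]
    apply MeasureTheory.setIntegral_mono_set hint.integrableOn
    · filter_upwards with x using by rw [hφ]; positivity
    · exact (Set.Iic_subset_Iic.2 hb).eventuallyLE
  rw [Phi_zero φ Φ hφ hΦ] at this
  exact this

lemma deriv_ell (ℓ : ℝ → ℝ)
    (hℓ : ∀ s, ℓ s = (1/2) * (Real.log (1 + Real.exp (-s)) + Real.log (1 + Real.exp s))) :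
    ∀ x, deriv ℓ x = Lp x := by
  have hfe : ℓ = fun s => (1/2) * (Real.log (1 + Real.exp (-s)) + Real.log (1 + Real.exp s)) :=
    funext hℓ
  intro x
  have h1 : HasDerivAt (fun s : ℝ => Real.exp (-s)) (-Real.exp (-x)) x := by
    simpa [Function.comp_def] using (Real.hasDerivAt_exp (-x)).comp x (hasDerivAt_neg x)
  have h1' : HasDerivAt (fun s : ℝ => 1 + Real.exp (-s)) (-Real.exp (-x)) x := h1.const_add 1
  have hne1 : 1 + Real.exp (-x) ≠ 0 := by positivity
  have h2 : HasDerivAt (fun s : ℝ => Real.log (1 + Real.exp (-s)))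
      (-Real.exp (-x) / (1 + Real.exp (-x))) x := h1'.log hne1
  have h3' : HasDerivAt (fun s : ℝ => 1 + Real.exp s) (Real.exp x) x :=
    (Real.hasDerivAt_exp x).const_add 1
  have hne2 : 1 + Real.exp x ≠ 0 := by positivity
  have h3 : HasDerivAt (fun s : ℝ => Real.log (1 + Real.exp s))
      (Real.exp x / (1 + Real.exp x)) x := h3'.log hne2
  have h4 : HasDerivAt ℓ
      ((1/2) * ((-Real.exp (-x) / (1 + Real.exp (-x))) + Real.exp x / (1 + Real.exp x))) x := by
    rw [hfe]; exact (h2.add h3).const_mul (1/2)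
  rw [h4.deriv]
  have hE := Real.exp_pos x
  have hEne : Real.exp x ≠ 0 := ne_of_gt hE
  unfold Lp
  rw [Real.exp_neg]
  have hne3 : 1 + (Real.exp x)⁻¹ ≠ 0 := by positivity
  field_simp
  ring

set_option maxHeartbeats 2000000 in
/-- Mean model, gradient-flow regime: with step size `η = (8−δ)π/d²`, initialization
`(A₀, 0)` with `A₀ > 0`, and `γ = (1/200)min{δ, 8−δ, (8−δ)/A₀}`, if `η ≤ γ/A₀`, then
the exponential decay `|A_t| ≤ A₀e^{−γt}` propagates one step (given `b_t ≥ −1` and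
`g(b_t) > 0.08`), and the bias always satisfies `0 ≥ b_t ≥ −ηA₀/γ`. -/
theorem mean_model_gradient_flow_regime
    (ℓ : ℝ → ℝ)
    (hℓ : ∀ s, ℓ s = (1/2) * (Real.log (1 + Real.exp (-s)) + Real.log (1 + Real.exp s)))
    (φ Φ g : ℝ → ℝ)
    (hφ : ∀ x, φ x = (2 * π) ^ (-(1:ℝ)/2) * Real.exp (-x ^ 2 / 2))
    (hΦ : ∀ b, Φ b = ∫ x in Set.Iic b, φ x)
    (hg : ∀ b, g b = φ b + b * Φ b)
    (d η δ γ : ℝ) (hd : 0 < d) (hδ : 0 < δ) (hδ8 : δ < 8)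
    (hη : η = (8 - δ) * π / d ^ 2)
    (A b : ℕ → ℝ)
    (hA : ∀ t, A (t+1) = A t - 2 * d ^ 2 * η * deriv ℓ (A t * g (b t)) * g (b t))
    (hb : ∀ t, b (t+1) = b t - η * deriv ℓ (A t * g (b t)) * A t * Φ (b t))
    (hA0 : 0 < A 0) (hb0 : b 0 = 0)
    (hγ : γ = (1/200) * min δ (min (8 - δ) ((8 - δ) / A 0)))
    (hηγ : η ≤ γ / A 0) :
    (∀ t, |A t| ≤ A 0 * Real.exp (-γ * t) → b t ≥ -1 → g (b t) > 0.08 →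
      |A (t+1)| ≤ A 0 * Real.exp (-γ * (t+1))) ∧
    (∀ t, -(η * A 0) / γ ≤ b t ∧ b t ≤ 0) := by
  have hder := deriv_ell ℓ hℓ
  have hΦ0 := Phi_nonneg φ Φ hφ hΦ
  have hΦh := Phi_le_half φ Φ hφ hΦ
  -- γ facts
  have hγpos : 0 < γ := by
    rw [hγ]
    have h1 : 0 < min δ (min (8 - δ) ((8 - δ) / A 0)) :=
      lt_min hδ (lt_min (by linarith) (div_pos (by linarith) hA0))
    linarith
  have hγδ : γ ≤ δ/200 := by
    rw [hγ]; have := min_le_left δ (min (8 - δ) ((8 - δ) / A 0)); linarith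
  have hγ8 : γ ≤ (8-δ)/200 := by
    rw [hγ]
    have h1 := min_le_right δ (min (8 - δ) ((8 - δ) / A 0))
    have h2 := min_le_left (8 - δ) ((8 - δ) / A 0)
    linarith
  have hγA : γ * A 0 ≤ (8-δ)/200 := by
    have h1 : γ ≤ (1/200) * ((8 - δ) / A 0) := by
      rw [hγ]
      have h1 := min_le_right δ (min (8 - δ) ((8 - δ) / A 0))
      have h2 := min_le_right (8 - δ) ((8 - δ) / A 0)
      linarith
    have h2 := mul_le_mul_of_nonneg_right h1 hA0.le
    have h3 : (1/200) * ((8 - δ) / A 0) * A 0 = (8-δ)/200 := by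
      field_simp
    rw [h3] at h2
    exact h2
  have hγs : γ ≤ 1/50 := by linarith
  have hηpos : 0 < η := by
    rw [hη]; exact div_pos (mul_pos (by linarith) Real.pi_pos) (pow_pos hd 2)
  have hηA : η * A 0 ≤ γ := by
    have := mul_le_mul_of_nonneg_right hηγ hA0.le
    rwa [div_mul_cancel₀ _ (ne_of_gt hA0)] at this
  have hK : 2 * d^2 * η = 2*(8-δ)*π := by
    rw [hη]; field_simp
  -- g bounds
  have hgub : ∀ y : ℝ, y ≤ 0 → g y ≤ (2*π)^(-(1:ℝ)/2) := by
    intro y hy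
    rw [hg, hφ]
    have h1 : y * Φ y ≤ 0 := mul_nonpos_of_nonpos_of_nonneg hy (hΦ0 y)
    have h2 : Real.exp (-y^2/2) ≤ 1 := Real.exp_le_one_iff.2 (by nlinarith [sq_nonneg y])
    have h3 : (0:ℝ) < (2*π)^(-(1:ℝ)/2) := Real.rpow_pos_of_pos (by positivity) _
    nlinarith
  have hCsq : ((2*π)^(-(1:ℝ)/2) : ℝ)^2 = 1/(2*π) := by
    have h1 : (2*π)^(-(1:ℝ)/2) = (Real.sqrt (2*π))⁻¹ := by
      rw [show (-(1:ℝ))/2 = -(1/2) by norm_num, Real.rpow_neg (by positivity),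
        ← Real.sqrt_eq_rpow]
    rw [h1, inv_pow, Real.sq_sqrt (by positivity), one_div]
  have hgsq : ∀ y : ℝ, y ≤ 0 → 0 < g y → (g y)^2 ≤ 1/(2*π) := by
    intro y hy hgy
    have h1 := hgub y hy
    rw [← hCsq]
    nlinarith [Real.rpow_pos_of_pos (show (0:ℝ) < 2*π by positivity) (-(1:ℝ)/2)]
  have hClb : (0.3989 : ℝ) ≤ (2*π)^(-(1:ℝ)/2) := by
    have h1 : (2*π)^(-(1:ℝ)/2) = (Real.sqrt (2*π))⁻¹ := by
      rw [show (-(1:ℝ))/2 = -(1/2) by norm_num, Real.rpow_neg (by positivity),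
        ← Real.sqrt_eq_rpow]
    have h2 : Real.sqrt (2*π) ≤ 2.5067 := by
      rw [show (2.5067:ℝ) = Real.sqrt (2.5067^2) by rw [Real.sqrt_sq (by norm_num)]]
      exact Real.sqrt_le_sqrt (by nlinarith [Real.pi_lt_d6])
    have h3 : (0:ℝ) < Real.sqrt (2*π) := Real.sqrt_pos.2 (by positivity)
    rw [h1]
    rw [le_inv_comm₀ (by norm_num) h3]
    calc Real.sqrt (2*π) ≤ 2.5067 := h2
      _ ≤ (0.3989:ℝ)⁻¹ := by norm_num
  have hglb : ∀ y : ℝ, -0.26 ≤ y → y ≤ 0 → 0.08 < g y := by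
    intro y h1 h2
    rw [hg]
    have hy2 : y^2 ≤ 0.0676 := by nlinarith
    have he : (0.9662:ℝ) ≤ Real.exp (-y^2/2) := by
      have := Real.add_one_le_exp (-y^2/2)
      linarith
    have hphi : (0.3854:ℝ) ≤ φ y := by
      rw [hφ]
      nlinarith [hClb]
    have hyΦ : -0.13 ≤ y * Φ y := by nlinarith [hΦ0 y, hΦh y h2]
    rw [hφ] at hphi ⊢
    nlinarith
  -- step lemma for A
  have stepA : ∀ t, |A t| ≤ A 0 * Real.exp (-γ * t) → b t ≤ 0 → 0.08 < g (b t) →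
      |A (t+1)| ≤ A 0 * Real.exp (-γ * ((t:ℝ)+1)) := by
    intro t hAt hbt hgt
    have hgpos : 0 < g (b t) := lt_trans (by norm_num) hgt
    have hgs := hgsq (b t) hbt hgpos
    have hexpt : (0:ℝ) < Real.exp (-γ * t) := Real.exp_pos _
    have hexple : Real.exp (-γ * t) ≤ 1 := by
      apply Real.exp_le_one_iff.2
      have h0t : (0:ℝ) ≤ (t:ℝ) := Nat.cast_nonneg t
      nlinarith [mul_nonneg hγpos.le h0t]
    have hAle : |A t| ≤ A 0 := le_trans hAt (by nlinarith)
    have hexps : Real.exp (-γ * ((t:ℝ)+1)) = Real.exp (-γ*t) * Real.exp (-γ) := by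
      rw [← Real.exp_add]; ring_nf
    have h1γ : 1 - γ ≤ Real.exp (-γ) := by
      have := Real.add_one_le_exp (-γ); linarith
    rw [hA t, hder, hK]
    rcases lt_trichotomy (A t) 0 with hc | hc | hc
    · have ha : 0 < -A t := by linarith
      have haA : -A t ≤ A 0 := by rw [abs_of_neg hc] at hAle; linarith
      have hk := keystep hδ hδ8 hγpos hγδ hγ8 hγA hgt hgs ha haA
      have heq : A t - 2*(8-δ)*π * Lp (A t * g (b t)) * g (b t)
          = -((-A t) - 2*(8-δ)*π * Lp ((-A t) * g (b t)) * g (b t)) := by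
        rw [show (-A t) * g (b t) = -(A t * g (b t)) by ring, Lp_odd]
        ring
      rw [heq, abs_neg]
      have hAtabs : -A t ≤ A 0 * Real.exp (-γ * t) := by
        rw [abs_of_neg hc] at hAt; linarith
      calc |(-A t) - 2*(8-δ)*π * Lp ((-A t) * g (b t)) * g (b t)| ≤ (1-γ) * (-A t) := hk
        _ ≤ Real.exp (-γ) * (A 0 * Real.exp (-γ * t)) := by nlinarith
        _ = A 0 * Real.exp (-γ * ((t:ℝ)+1)) := by rw [hexps]; ring
    · rw [hc]
      simp only [zero_mul, Lp_zero, mul_zero, zero_sub, abs_neg, abs_zero]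
      positivity
    · have haA : A t ≤ A 0 := by rw [abs_of_pos hc] at hAle; linarith
      have hk := keystep hδ hδ8 hγpos hγδ hγ8 hγA hgt hgs hc haA
      have hAtabs : A t ≤ A 0 * Real.exp (-γ * t) := by
        rw [abs_of_pos hc] at hAt; linarith
      calc |A t - 2*(8-δ)*π * Lp (A t * g (b t)) * g (b t)| ≤ (1-γ) * A t := hk
        _ ≤ Real.exp (-γ) * (A 0 * Real.exp (-γ * t)) :=
            mul_le_mul h1γ hAtabs hc.le (Real.exp_pos _).le
        _ = A 0 * Real.exp (-γ * ((t:ℝ)+1)) := by rw [hexps]; ring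
  -- joint induction
  have hE1 : Real.exp (-γ) < 1 := Real.exp_lt_one_iff.2 (by linarith)
  have hEpos : (0:ℝ) < Real.exp (-γ) := Real.exp_pos _
  have hEe : Real.exp (-γ) * (1 + γ) ≤ 1 := by
    have h1 := Real.add_one_le_exp γ
    have h2 : Real.exp (-γ) * Real.exp γ = 1 := by rw [← Real.exp_add]; simp
    nlinarith
  have hden : 0 < 1 - Real.exp (-γ) := by linarith
  have hquarter : γ ≤ 4 * (1 - Real.exp (-γ)) := by
    have hElb : 1 - γ ≤ Real.exp (-γ) := by
      have := Real.add_one_le_exp (-γ); linarith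
    nlinarith
  have main : ∀ t, |A t| ≤ A 0 * Real.exp (-γ * t) ∧ b t ≤ 0 ∧
      -(η * A 0 / 4 * ((1 - Real.exp (-γ * t)) / (1 - Real.exp (-γ)))) ≤ b t := by
    intro t
    induction t with
    | zero =>
      refine ⟨?_, by rw [hb0], ?_⟩
      · simp only [Nat.cast_zero, mul_zero, Real.exp_zero, mul_one]
        rw [abs_of_pos hA0]
      · rw [hb0]
        simp only [Nat.cast_zero, mul_zero, Real.exp_zero, sub_self, zero_div, mul_zero, neg_zero]
        exact le_refl 0
    | succ t ih =>
      obtain ⟨ih1, ih2, ih3⟩ := ih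
      have hexpt : (0:ℝ) < Real.exp (-γ * t) := Real.exp_pos _
      have hexple : Real.exp (-γ * t) ≤ 1 := by
        apply Real.exp_le_one_iff.2
        have h0t : (0:ℝ) ≤ (t:ℝ) := Nat.cast_nonneg t
        nlinarith [mul_nonneg hγpos.le h0t]
      -- b t is not too negative
      have hblb : -0.26 ≤ b t := by
        have h1 : η * A 0 / 4 * ((1 - Real.exp (-γ * t)) / (1 - Real.exp (-γ))) ≤ 0.26 := by
          rw [← mul_div_assoc, div_le_iff₀ hden]
          have hfine2 : 0.98 * γ ≤ 1 - Real.exp (-γ) := by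
            have hElb : 1 - γ ≤ Real.exp (-γ) := by
              have := Real.add_one_le_exp (-γ); linarith
            nlinarith [hEe, mul_nonneg hγpos.le
              (show (0:ℝ) ≤ Real.exp (-γ) - 0.98 by linarith)]
          have hp : 0 < η * A 0 := mul_pos hηpos hA0
          have hx1 : 0 ≤ 1 - Real.exp (-γ * t) := by linarith
          have hx2 : η * A 0 * (1 - Real.exp (-γ * t)) ≤ γ * (1 - Real.exp (-γ * t)) :=
            mul_le_mul_of_nonneg_right hηA hx1
          have hx3 : γ * (1 - Real.exp (-γ * t)) ≤ γ := by nlinarith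
          linarith
        linarith
      have hgt := hglb (b t) hblb ih2
      have hgpos : 0 < g (b t) := lt_trans (by norm_num) hgt
      have hA' := stepA t ih1 ih2 hgt
      -- b step
      have hLA : 0 ≤ Lp (A t * g (b t)) * A t := Lp_mul_nonneg (A t) (g (b t)) hgpos.le
      have hbstep : b (t+1) ≤ b t := by
        rw [hb t, hder]
        nlinarith [hΦ0 (b t), mul_nonneg (mul_nonneg hηpos.le hLA) (hΦ0 (b t))]
      have hLabs : Lp (A t * g (b t)) * A t ≤ |A t| / 2 := by
        have h1 := Lp_abs_le (A t * g (b t))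
        calc Lp (A t * g (b t)) * A t ≤ |Lp (A t * g (b t)) * A t| := le_abs_self _
          _ = |Lp (A t * g (b t))| * |A t| := abs_mul _ _
          _ ≤ (1/2) * |A t| := mul_le_mul_of_nonneg_right h1 (abs_nonneg _)
          _ = |A t| / 2 := by ring
      have hdec : η * Lp (A t * g (b t)) * A t * Φ (b t) ≤ η * A 0 / 4 * Real.exp (-γ * t) := by
        have h1 : Lp (A t * g (b t)) * A t * Φ (b t) ≤ (|A t| / 2) * (1/2) := by
          have hi1 := mul_le_mul_of_nonneg_left (hΦh (b t) ih2) hLA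
          nlinarith [hLabs]
        have h2 : |A t| / 2 * (1/2) ≤ A 0 * Real.exp (-γ * t) / 4 := by nlinarith
        nlinarith [mul_le_mul_of_nonneg_left (le_trans h1 h2) hηpos.le]
      have hexps : Real.exp (-γ * ((t:ℝ)+1)) = Real.exp (-γ*t) * Real.exp (-γ) := by
        rw [← Real.exp_add]; ring_nf
      refine ⟨by push_cast; exact hA', by linarith [ih2, hbstep], ?_⟩
      have heq : (1 - Real.exp (-γ*t)) / (1 - Real.exp (-γ)) + Real.exp (-γ*t)
          = (1 - Real.exp (-γ * ((t:ℝ)+1))) / (1 - Real.exp (-γ)) := by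
        rw [hexps]
        field_simp
        ring
      have hb' : b (t+1) ≥ b t - η * A 0 / 4 * Real.exp (-γ * t) := by
        rw [hb t, hder]
        nlinarith [hdec]
      have hsplit2 : -(η * A 0 / 4 * ((1 - Real.exp (-γ * ((t:ℝ)+1))) / (1 - Real.exp (-γ))))
          = -(η * A 0 / 4 * ((1 - Real.exp (-γ * t)) / (1 - Real.exp (-γ))))
            - η * A 0 / 4 * Real.exp (-γ * t) := by
        rw [← heq]; ring
      push_cast
      rw [hsplit2]
      linarith
  constructor
  · intro t h1 _ h3
    exact stepA t h1 (main t).2.1 h3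
  · intro t
    obtain ⟨_, h2, h3⟩ := main t
    refine ⟨?_, h2⟩
    have hexple : Real.exp (-γ * t) ≤ 1 := by
      apply Real.exp_le_one_iff.2
      have h4 : (0:ℝ) ≤ (t:ℝ) := Nat.cast_nonneg t
      nlinarith [mul_nonneg hγpos.le h4]
    have hexpt : (0:ℝ) < Real.exp (-γ * t) := Real.exp_pos _
    have h5 : η * A 0 / 4 * ((1 - Real.exp (-γ * t)) / (1 - Real.exp (-γ))) ≤ (η * A 0) / γ := by
      rw [← mul_div_assoc, div_le_div_iff₀ hden hγpos]
      have hp : 0 < η * A 0 := mul_pos hηpos hA0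
      have hx1 : 0 ≤ 1 - Real.exp (-γ * t) := by linarith
      have hx2 : η * A 0 / 4 * (1 - Real.exp (-γ * t)) * γ ≤ η * A 0 / 4 * γ := by
        nlinarith [mul_nonneg (mul_nonneg hp.le hexpt.le) hγpos.le]
      have hx3 := mul_le_mul_of_nonneg_left hquarter (show (0:ℝ) ≤ η * A 0 / 4 by positivity)
      nlinarith
    have hneg : -(η * A 0) / γ = -(η * A 0 / γ) := by ring
    rw [hneg]
    linarith
end

section
/- Consider the mean model with step size η = (8+δ)π/d² for δ > 0, and assume A_t ≠ 0 for all t with (1/2)d²g(b_t)² > 2/η. If there exists ε > 0 such that (1/2)d²g(b_t)² > (2+ε)/η for all t, then liminf_{t→∞}|A_t| > 0 and b_t decreases without stabilizing; consequently lim_{t→∞}(1/2)d²g(b_t)² ≤ 2/η, which implies b_∞ ≤ g^{−1}(2/√((8+δ)π)). -/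
open Real Filter MeasureTheory

noncomputable def Dl (s : ℝ) : ℝ := (Real.exp s - 1) / (2 * (Real.exp s + 1))
lemma Dl_eq (s : ℝ) : Dl s = 1/2 - 1/(Real.exp s + 1) := by
  have h : 0 < Real.exp s + 1 := by positivity
  unfold Dl; field_simp; ring

lemma Dl_mono : Monotone Dl := by
  intro a b hab
  rw [Dl_eq, Dl_eq]
  have ha : (0:ℝ) < Real.exp a + 1 := by positivity
  have hb : (0:ℝ) < Real.exp b + 1 := by positivity
  have := Real.exp_le_exp.2 hab
  have : 1/(Real.exp b + 1) ≤ 1/(Real.exp a + 1) := by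
    apply one_div_le_one_div_of_le ha; linarith
  linarith

lemma Dl_neg_eq (s : ℝ) : Dl (-s) = - Dl s := by
  have h : Real.exp s ≠ 0 := (Real.exp_pos s).ne'
  have h2 : 0 < Real.exp s + 1 := by positivity
  have h3 : 0 < Real.exp (-s) + 1 := by positivity
  unfold Dl
  rw [Real.exp_neg]
  field_simp
  ring

lemma Dl_nonneg {s : ℝ} (hs : 0 ≤ s) : 0 ≤ Dl s := by
  have := Dl_mono hs
  simpa [Dl] using this

lemma Dl_pos {s : ℝ} (hs : 0 < s) : 0 < Dl s := by
  have h1 : 1 < Real.exp s := by have := Real.add_one_le_exp s; linarith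
  have h2 : (0:ℝ) < 2 * (Real.exp s + 1) := by positivity
  exact div_pos (by linarith) h2

lemma Dl_mul_self_nonneg (s : ℝ) : 0 ≤ Dl s * s := by
  rcases le_or_gt 0 s with h | h
  · exact mul_nonneg (Dl_nonneg h) h
  · have : Dl s ≤ 0 := by
      have := Dl_neg_eq s
      have h2 : 0 ≤ Dl (-s) := Dl_nonneg (by linarith)
      linarith
    nlinarith

lemma Dl_abs (s : ℝ) : Dl |s| = |Dl s| := by
  rcases le_or_gt 0 s with h | h
  · rw [abs_of_nonneg h, abs_of_nonneg (Dl_nonneg h)]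
  · have h1 : Dl s ≤ 0 := by
      have h2 : 0 ≤ Dl (-s) := Dl_nonneg (by linarith)
      have := Dl_neg_eq s; linarith
    rw [abs_of_neg h, abs_of_nonpos h1, Dl_neg_eq]

lemma Dl_mul_self_big {m x : ℝ} (hm : 0 < m) (hx : m ≤ |x|) :
    Dl m * m ≤ Dl x * x := by
  have h1 : Dl x * x = Dl |x| * |x| := by
    rw [Dl_abs]
    rcases le_or_gt 0 x with h | h
    · rw [abs_of_nonneg h, abs_of_nonneg (Dl_nonneg h)]
    · have h2 : 0 ≤ Dl (-x) := Dl_nonneg (by linarith)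
      have h3 := Dl_neg_eq x
      rw [abs_of_neg h, abs_of_nonpos (by linarith)]
      ring
  rw [h1]
  have h2 : Dl m ≤ Dl |x| := Dl_mono hx
  have h3 : 0 ≤ Dl m := Dl_nonneg hm.le
  nlinarith

lemma deriv_lsym (ℓ : ℝ → ℝ)
    (hℓ : ∀ s, ℓ s = (1/2) * (Real.log (1 + Real.exp (-s)) + Real.log (1 + Real.exp s))) :
    ∀ s, deriv ℓ s = Dl s := by
  have hℓ' : ℓ = fun s => (1/2) * (Real.log (1 + Real.exp (-s)) + Real.log (1 + Real.exp s)) :=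
    funext hℓ
  subst hℓ'
  intro s
  have h1 : 0 < 1 + Real.exp (-s) := by positivity
  have h2 : 0 < 1 + Real.exp s := by positivity
  have e0 : HasDerivAt (fun x : ℝ => Real.exp (-x)) (Real.exp (-s) * (-1)) s :=
    (Real.hasDerivAt_exp (-s)).comp s ((hasDerivAt_id s).neg)
  have e1 : HasDerivAt (fun x : ℝ => 1 + Real.exp (-x)) (Real.exp (-s) * (-1)) s :=
    e0.const_add 1
  have e2 : HasDerivAt (fun x : ℝ => 1 + Real.exp x) (Real.exp s) s :=
    (Real.hasDerivAt_exp s).const_add 1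
  have l1 : HasDerivAt (fun x : ℝ => Real.log (1 + Real.exp (-x)))
      ((1 + Real.exp (-s))⁻¹ * (Real.exp (-s) * (-1))) s :=
    by have := (Real.hasDerivAt_log h1.ne').comp s e1; exact this
  have l2 : HasDerivAt (fun x : ℝ => Real.log (1 + Real.exp x))
      ((1 + Real.exp s)⁻¹ * Real.exp s) s :=
    by have := (Real.hasDerivAt_log h2.ne').comp s e2; exact this
  have hd := ((l1.add l2).const_mul (1/2 : ℝ))
  rw [HasDerivAt.deriv (f := fun s : ℝ => (1/2:ℝ) * (Real.log (1 + Real.exp (-s)) + Real.log (1 + Real.exp s))) hd]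
  have hE : Real.exp s ≠ 0 := (Real.exp_pos s).ne'
  have h3 : 0 < Real.exp s + 1 := by positivity
  rw [Real.exp_neg]
  unfold Dl
  field_simp
  ring

lemma Dl_div_tendsto : Tendsto (fun x => Dl x / x) (nhdsWithin 0 {0}ᶜ) (nhds (1/4)) := by
  have h1 : Tendsto (slope Real.exp 0) (nhdsWithin 0 {0}ᶜ) (nhds 1) := by
    have := (Real.hasDerivAt_exp 0)
    rw [hasDerivAt_iff_tendsto_slope] at this
    simpa using this
  have h2 : Tendsto (fun x : ℝ => (2 * (Real.exp x + 1))⁻¹) (nhdsWithin 0 {0}ᶜ) (nhds (1/4)) := by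
    have hc : ContinuousAt (fun x : ℝ => (2 * (Real.exp x + 1))⁻¹) 0 := by
      apply ContinuousAt.inv₀ (by fun_prop) (by norm_num)
    have h0 : (fun x : ℝ => (2 * (Real.exp x + 1))⁻¹) 0 = 1/4 := by norm_num
    rw [← h0]
    exact hc.tendsto.mono_left (nhdsWithin_le_nhds (s := ({0}ᶜ : Set ℝ)))
  have h3 := h1.mul h2
  have : (1:ℝ) * (1/4) = 1/4 := by norm_num
  rw [this] at h3
  apply h3.congr'
  filter_upwards [self_mem_nhdsWithin] with x hx
  have hx0 : x ≠ 0 := hx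
  simp only [slope_def_field, Real.exp_zero]
  unfold Dl
  field_simp
  ring
noncomputable def phi0 (x : ℝ) : ℝ := (2 * π) ^ (-(1:ℝ)/2) * Real.exp (-x ^ 2 / 2)
noncomputable def Phi0 (b : ℝ) : ℝ := ∫ x in Set.Iic b, phi0 x

lemma two_pi_rpow_pos : 0 < (2 * π) ^ (-(1:ℝ)/2) :=
  Real.rpow_pos_of_pos (by positivity) _

lemma phi0_pos (x : ℝ) : 0 < phi0 x := by
  unfold phi0; positivity

lemma phi0_le (x : ℝ) : phi0 x ≤ (2 * π) ^ (-(1:ℝ)/2) := by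
  unfold phi0
  nlinarith [Real.exp_le_one_iff.2 (by nlinarith [sq_nonneg x] : -x^2/2 ≤ 0),
    two_pi_rpow_pos, Real.exp_pos (-x^2/2)]

lemma phi0_cont : Continuous phi0 := by
  unfold phi0; fun_prop

lemma phi0_integrable : Integrable phi0 := by
  have h := (integrable_exp_neg_mul_sq (by norm_num : (0:ℝ) < 1/2)).const_mul
    ((2 * π) ^ (-(1:ℝ)/2))
  apply h.congr
  filter_upwards with x
  unfold phi0
  ring_nf

lemma xphi0_integrable : Integrable (fun x => x * phi0 x) := by
  have h := (integrable_mul_exp_neg_mul_sq (by norm_num : (0:ℝ) < 1/2)).const_mul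
    ((2 * π) ^ (-(1:ℝ)/2))
  apply h.congr
  filter_upwards with x
  unfold phi0
  ring_nf

lemma phi0_hasDeriv (x : ℝ) : HasDerivAt (fun y => -phi0 y) (x * phi0 x) x := by
  have h1 : HasDerivAt (fun y : ℝ => -y ^ 2 / 2) (-x) x := by
    have := ((hasDerivAt_pow 2 x).neg).div_const 2
    exact this.congr_deriv (by norm_num; ring)
  have h2 := (Real.hasDerivAt_exp (-x^2/2)).comp x h1
  have h3 := (h2.const_mul ((2 * π) ^ (-(1:ℝ)/2))).neg
  exact h3.congr_deriv (by unfold phi0; ring)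

lemma phi0_tendsto_atBot : Tendsto (fun x => -phi0 x) atBot (nhds 0) := by
  have h1 : Tendsto (fun x : ℝ => -x ^ 2 / 2) atBot atBot := by
    have hev : (fun x : ℝ => -x ^ 2 / 2) ≤ᶠ[atBot] (fun x : ℝ => x) := by
      filter_upwards [Filter.Iic_mem_atBot (-2 : ℝ)] with x hx
      nlinarith [Set.mem_Iic.1 hx]
    exact tendsto_atBot_mono' atBot hev (tendsto_id)
  have h2 := (Real.tendsto_exp_atBot.comp h1).const_mul ((2 * π) ^ (-(1:ℝ)/2))
  have h3 := h2.neg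
  simpa [phi0, Function.comp] using h3

lemma int_xphi0 (b : ℝ) : ∫ x in Set.Iic b, x * phi0 x = -phi0 b := by
  have := MeasureTheory.integral_Iic_of_hasDerivAt_of_tendsto
    (f := fun y => -phi0 y) (f' := fun x => x * phi0 x) (a := b)
    ((phi0_cont.neg).continuousWithinAt)
    (fun x _ => phi0_hasDeriv x)
    (xphi0_integrable.integrableOn)
    phi0_tendsto_atBot
  simpa using this

lemma Phi0_nonneg (b : ℝ) : 0 ≤ Phi0 b := by
  apply setIntegral_nonneg measurableSet_Iic
  intro x _; exact (phi0_pos x).le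

lemma Phi0_mono {a b : ℝ} (hab : a ≤ b) : Phi0 a ≤ Phi0 b := by
  apply setIntegral_mono_set phi0_integrable.integrableOn
  · filter_upwards with x using (phi0_pos x).le
  · exact HasSubset.Subset.eventuallyLE (Set.Iic_subset_Iic.2 hab)

lemma Phi0_diff {a b : ℝ} (hab : a ≤ b) :
    Phi0 b - Phi0 a = ∫ x in Set.Ioc a b, phi0 x := by
  have hu : Set.Iic a ∪ Set.Ioc a b = Set.Iic b := Set.Iic_union_Ioc_eq_Iic hab
  have hd : Disjoint (Set.Iic a) (Set.Ioc a b) := Set.Iic_disjoint_Ioc le_rfl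
  have := MeasureTheory.setIntegral_union (f := phi0) (μ := volume) hd measurableSet_Ioc
    phi0_integrable.integrableOn phi0_integrable.integrableOn
  unfold Phi0
  rw [← hu, this]
  ring

lemma Phi0_lip {a b : ℝ} (hab : a ≤ b) :
    Phi0 b - Phi0 a ≤ (2 * π) ^ (-(1:ℝ)/2) * (b - a) := by
  rw [Phi0_diff hab]
  have h1 : ∫ x in Set.Ioc a b, phi0 x ≤ ∫ _x in Set.Ioc a b, (2 * π) ^ (-(1:ℝ)/2) := by
    apply setIntegral_mono_on phi0_integrable.integrableOn
      (integrableOn_const (by simp) (by simp))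
      measurableSet_Ioc
    intro x _; exact phi0_le x
  have h2 : ∫ _x in Set.Ioc a b, ((2 * π) ^ (-(1:ℝ)/2) : ℝ) =
      (2 * π) ^ (-(1:ℝ)/2) * (b - a) := by
    rw [setIntegral_const, measureReal_def, Real.volume_Ioc, ENNReal.toReal_ofReal (by linarith), smul_eq_mul]
    ring
  linarith

lemma Phi0_pos (b : ℝ) : 0 < Phi0 b := by
  have h1 : Phi0 b - Phi0 (b-1) = ∫ x in Set.Ioc (b-1) b, phi0 x := Phi0_diff (by linarith)
  have h2 : (0:ℝ) < ∫ x in Set.Ioc (b-1) b, phi0 x := by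
    have he : ∫ x in Set.Ioc (b-1) b, phi0 x = ∫ x in (b-1)..b, phi0 x :=
      (intervalIntegral.integral_of_le (by linarith)).symm
    rw [he]
    apply intervalIntegral.intervalIntegral_pos_of_pos_on
      (phi0_integrable.intervalIntegrable)
      (fun x _ => phi0_pos x) (by linarith)
  have := Phi0_nonneg (b-1)
  linarith

lemma gauss_tail {b : ℝ} (hb : b < 0) : Phi0 b ≤ phi0 b / (-b) := by
  have h1 : Phi0 b ≤ ∫ x in Set.Iic b, (1/b) * (x * phi0 x) := by
    apply setIntegral_mono_on phi0_integrable.integrableOn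
      ((xphi0_integrable.const_mul (1/b)).integrableOn)
      measurableSet_Iic
    intro x hx
    have hx' : x ≤ b := hx
    have h2 : 1 ≤ x / b := (one_le_div_of_neg hb).2 hx'
    have h3 := phi0_pos x
    have : phi0 x ≤ (x / b) * phi0 x := le_mul_of_one_le_left h3.le h2
    calc phi0 x ≤ (x / b) * phi0 x := this
      _ = (1/b) * (x * phi0 x) := by ring
  have h2 : ∫ x in Set.Iic b, (1/b) * (x * phi0 x) = (1/b) * (-phi0 b) := by
    rw [integral_const_mul, int_xphi0]
  rw [h2] at h1
  calc Phi0 b ≤ (1/b) * (-phi0 b) := h1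
    _ = phi0 b / (-b) := by rw [div_neg]; ring

lemma g0_nonneg (x : ℝ) : 0 ≤ phi0 x + x * Phi0 x := by
  rcases le_or_gt 0 x with h | h
  · have := Phi0_nonneg x
    have := phi0_pos x
    nlinarith
  · have h1 := gauss_tail h
    have hx : (0:ℝ) < -x := by linarith
    have h2 : Phi0 x * (-x) ≤ phi0 x := (le_div_iff₀ hx).1 h1
    nlinarith

lemma DlA_nonneg (a gg : ℝ) (hg : 0 ≤ gg) : 0 ≤ Dl (a * gg) * a := by
  rcases eq_or_lt_of_le hg with h | h
  · simp [← h, Dl]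
  · nlinarith [Dl_mul_self_nonneg (a * gg)]

lemma Phi0_cont : Continuous Phi0 := by
  apply LipschitzWith.continuous (K := Real.toNNReal ((2 * π) ^ (-(1:ℝ)/2)))
  apply LipschitzWith.of_dist_le_mul
  intro x y
  have hc : (Real.toNNReal ((2 * π) ^ (-(1:ℝ)/2)) : ℝ) = (2 * π) ^ (-(1:ℝ)/2) :=
    Real.coe_toNNReal _ two_pi_rpow_pos.le
  rw [hc, Real.dist_eq, Real.dist_eq]
  rcases le_total x y with h | h
  · have h1 := Phi0_lip h
    have h2 := Phi0_mono h
    rw [abs_of_nonpos (by linarith), abs_of_nonpos (by linarith)]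
    linarith
  · have h1 := Phi0_lip h
    have h2 := Phi0_mono h
    rw [abs_of_nonneg (by linarith), abs_of_nonneg (by linarith)]
    linarith

lemma expand_eq (a gg dd ee : ℝ) (ha : a ≠ 0) (hg : gg ≠ 0) :
    a - 2*dd^2*ee*Dl (a*gg)*gg = a * (1 - (2*dd^2*ee*gg^2) * (Dl (a*gg)/(a*gg))) := by
  field_simp

lemma growth_num {K r e : ℝ} (hK : 4*(2+e) < K) (hr : 1/4 - e/(8*(2+e)) < r) (he : 0 < e) :
    2 + e/2 < K * r := by
  have h2e : (0:ℝ) < 2 + e := by linarith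
  have heps : e/(8*(2+e)) < 1/8 := by
    rw [div_lt_iff₀ (by linarith)]
    nlinarith
  have hr0 : (0:ℝ) < 1/4 - e/(8*(2+e)) := by linarith
  have hK0 : (0:ℝ) < K := by linarith
  have step1 : (4*(2+e)) * (1/4 - e/(8*(2+e))) < K * r := by
    have a1 : (4*(2+e)) * (1/4 - e/(8*(2+e))) < K * (1/4 - e/(8*(2+e))) :=
      (mul_lt_mul_iff_left₀ hr0).2 hK
    have a2 : K * (1/4 - e/(8*(2+e))) < K * r := (mul_lt_mul_iff_right₀ hK0).2 hr
    linarith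
  have step2 : (4*(2+e)) * (1/4 - e/(8*(2+e))) = 2 + e/2 := by
    field_simp
    ring
  linarith

set_option maxHeartbeats 1000000 in
/-- Mean model, EoS regime: with step size `η = (8+δ)π/d²`, if `A_t ≠ 0` whenever
`(1/2)d²g(b_t)² > 2/η`, then: (i) if `(1/2)d²g(b_t)² > (2+ε)/η` for all `t`, then
`liminf |A_t| > 0`; (ii) any limit of `(1/2)d²g(b_t)²` is at most `2/η`; and
(iii) any limit `b_∞` of `b_t` satisfies `g(b_∞) ≤ 2/√((8+δ)π)`. -/
theorem mean_model_eos_regime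
    (ℓ : ℝ → ℝ)
    (hℓ : ∀ s, ℓ s = (1/2) * (Real.log (1 + Real.exp (-s)) + Real.log (1 + Real.exp s)))
    (φ Φ g : ℝ → ℝ)
    (hφ : ∀ x, φ x = (2 * π) ^ (-(1:ℝ)/2) * Real.exp (-x ^ 2 / 2))
    (hΦ : ∀ b, Φ b = ∫ x in Set.Iic b, φ x)
    (hg : ∀ b, g b = φ b + b * Φ b)
    (d η δ : ℝ) (hd : 0 < d) (hδ : 0 < δ)
    (hη : η = (8 + δ) * π / d ^ 2)
    (A b : ℕ → ℝ)
    (hA : ∀ t, A (t+1) = A t - 2 * d ^ 2 * η * deriv ℓ (A t * g (b t)) * g (b t))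
    (hb : ∀ t, b (t+1) = b t - η * deriv ℓ (A t * g (b t)) * A t * Φ (b t))
    (hA0 : ∀ t, (1/2) * d ^ 2 * (g (b t)) ^ 2 > 2 / η → A t ≠ 0) :
    (∀ ε > 0, (∀ t, (1/2) * d ^ 2 * (g (b t)) ^ 2 > (2 + ε) / η) →
      0 < Filter.liminf (fun t => |A t|) Filter.atTop) ∧
    (∀ L : ℝ, Filter.Tendsto (fun t => (1/2) * d ^ 2 * (g (b t)) ^ 2)
        Filter.atTop (nhds L) → L ≤ 2 / η) ∧
    (∀ binf : ℝ, Filter.Tendsto b Filter.atTop (nhds binf) →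
      g binf ≤ 2 / Real.sqrt ((8 + δ) * π)) := by
  have hπ : (0:ℝ) < π := Real.pi_pos
  have hη0 : 0 < η := by rw [hη]; positivity
  have hφ' : φ = phi0 := funext hφ
  subst hφ'
  have hΦ' : Φ = Phi0 := funext fun x => (hΦ x).trans rfl
  subst hΦ'
  have hder : ∀ s, deriv ℓ s = Dl s := deriv_lsym ℓ hℓ
  have g_nn : ∀ x, 0 ≤ g x := fun x => by rw [hg]; exact g0_nonneg x
  have b_succ : ∀ t, b (t+1) ≤ b t := by
    intro t
    rw [hb t, hder]
    have h1 : 0 ≤ Dl (A t * g (b t)) * A t := DlA_nonneg _ _ (g_nn _)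
    have h2 : 0 ≤ Phi0 (b t) := Phi0_nonneg _
    nlinarith [hη0.le, mul_nonneg (mul_nonneg hη0.le h1) h2]
  have b_anti : Antitone b := antitone_nat_of_succ_le b_succ
  -- The key impossibility result
  have key : ∀ ε : ℝ, 0 < ε → ∀ T : ℕ,
      (∀ t, T ≤ t → (1/2) * d ^ 2 * (g (b t)) ^ 2 > (2 + ε) / η) → False := by
    intro ε hε T hcond
    have h2e : (0:ℝ) < 2 + ε := by linarith
    have hgstar2 : (Real.sqrt (2*(2+ε)/(d^2*η)))^2 = 2*(2+ε)/(d^2*η) :=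
      Real.sq_sqrt (by positivity)
    set gstar : ℝ := Real.sqrt (2*(2+ε)/(d^2*η)) with hgstar
    have hgstar0 : 0 < gstar := Real.sqrt_pos.2 (by positivity)
    have hglow : ∀ t, T ≤ t → gstar ≤ g (b t) := by
      intro t ht
      have h1 := hcond t ht
      have h2 : 2*(2+ε)/(d^2*η) ≤ (g (b t))^2 := by
        rw [div_le_iff₀ (by positivity)]
        have h3 : 2+ε < (1/2) * d ^ 2 * (g (b t)) ^ 2 * η := (div_lt_iff₀ hη0).1 h1
        nlinarith [h3]
      calc gstar ≤ Real.sqrt ((g (b t))^2) := by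
            rw [hgstar]; exact Real.sqrt_le_sqrt h2
        _ = |g (b t)| := Real.sqrt_sq_eq_abs _
        _ = g (b t) := abs_of_nonneg (g_nn _)
    have hgpos : ∀ t, T ≤ t → 0 < g (b t) := fun t ht => lt_of_lt_of_le hgstar0 (hglow t ht)
    have hAne : ∀ t, T ≤ t → A t ≠ 0 := by
      intro t ht
      apply hA0 t
      have h2 : (2:ℝ)/η < (2+ε)/η := by
        rw [div_lt_div_iff₀ hη0 hη0]
        nlinarith [hη0]
      exact lt_trans h2 (hcond t ht)
    -- lower bound for b
    have hcc0 : (0:ℝ) < (2 * π) ^ (-(1:ℝ)/2) := two_pi_rpow_pos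
    set K0 : ℝ := -2 * Real.log (gstar / ((2 * π) ^ (-(1:ℝ)/2))) with hK0
    have hBlo : ∀ t, T ≤ t → -Real.sqrt K0 ≤ b t := by
      intro t ht
      rcases le_or_gt 0 (b t) with h | h
      · have := Real.sqrt_nonneg K0; linarith
      · have h1 : gstar ≤ phi0 (b t) := by
          have h2 := hglow t ht
          rw [hg] at h2
          have h3 : b t * Phi0 (b t) ≤ 0 :=
            mul_nonpos_of_nonpos_of_nonneg h.le (Phi0_nonneg _)
          linarith
        have h2 : gstar / ((2 * π) ^ (-(1:ℝ)/2)) ≤ Real.exp (-(b t)^2/2) := by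
          rw [div_le_iff₀ hcc0]
          unfold phi0 at h1
          linarith [h1]
        have h3 : Real.log (gstar / ((2 * π) ^ (-(1:ℝ)/2))) ≤ -(b t)^2/2 :=
          (Real.log_le_iff_le_exp (by positivity)).2 h2
        have h4 : (b t)^2 ≤ K0 := by rw [hK0]; linarith
        have h5 : |b t| ≤ Real.sqrt K0 := by
          rw [← Real.sqrt_sq_eq_abs]
          exact Real.sqrt_le_sqrt h4
        have := neg_abs_le (b t)
        linarith
    have hbddB : ∀ t, -Real.sqrt K0 ≤ b t := by
      intro t
      rcases le_total T t with h | h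
      · exact hBlo t h
      · exact le_trans (hBlo T le_rfl) (b_anti h)
    have hbdd : BddBelow (Set.range b) := ⟨-Real.sqrt K0, by rintro y ⟨t, rfl⟩; exact hbddB t⟩
    have hconv : Tendsto b atTop (nhds (⨅ t, b t)) := tendsto_atTop_ciInf b_anti hbdd
    have hble : ∀ t, (⨅ t, b t) ≤ b t := fun t => ciInf_le hbdd t
    have hPlo0 : 0 < Phi0 (⨅ t, b t) := Phi0_pos _
    set Plo : ℝ := Phi0 (⨅ t, b t) with hPloDef
    have hPhige : ∀ t, Plo ≤ Phi0 (b t) := fun t => Phi0_mono (hble t)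
    -- upper bound for g along the trajectory
    set C : ℝ := (2 * π) ^ (-(1:ℝ)/2) + max (b 0 * Phi0 (b 0)) 0 with hC
    have hC0 : 0 < C := by
      have := le_max_right (b 0 * Phi0 (b 0)) (0:ℝ)
      rw [hC]; linarith
    have hgup : ∀ t, g (b t) ≤ C := by
      intro t
      rw [hg]
      have h1 : phi0 (b t) ≤ (2 * π) ^ (-(1:ℝ)/2) := phi0_le _
      have hble0 : b t ≤ b 0 := b_anti (Nat.zero_le t)
      rcases le_or_gt (b t) 0 with h | h
      · have h2 : b t * Phi0 (b t) ≤ 0 :=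
          mul_nonpos_of_nonpos_of_nonneg h (Phi0_nonneg _)
        have := le_max_right (b 0 * Phi0 (b 0)) (0:ℝ)
        rw [hC]; linarith
      · have h2 : b t * Phi0 (b t) ≤ b 0 * Phi0 (b 0) :=
          mul_le_mul hble0 (Phi0_mono hble0) (Phi0_nonneg _) (by linarith)
        have := le_max_left (b 0 * Phi0 (b 0)) (0:ℝ)
        rw [hC]; linarith
    -- the steps of b tend to zero
    have hstep : Tendsto (fun t => b t - b (t+1)) atTop (nhds 0) := by
      have h1 : Tendsto (fun t => b (t+1)) atTop (nhds (⨅ t, b t)) :=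
        hconv.comp (tendsto_add_atTop_nat 1)
      have := hconv.sub h1
      simpa using this
    -- Dl x * x tends to zero
    have hDxx0 : ∀ t, 0 ≤ Dl (A t * g (b t)) * (A t * g (b t)) :=
      fun t => Dl_mul_self_nonneg _
    have hDxxle : ∀ t, T ≤ t →
        Dl (A t * g (b t)) * (A t * g (b t)) ≤ (C/(η*Plo)) * (b t - b (t+1)) := by
      intro t ht
      have hgt := hgpos t ht
      have hstep_eq : b t - b (t+1) = η * (Dl (A t * g (b t)) * A t) * Phi0 (b t) := by
        rw [hb t, hder]; ring
      have h1 : 0 ≤ Dl (A t * g (b t)) * A t := DlA_nonneg _ _ (g_nn _)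
      have h4 : Dl (A t * g (b t)) * (A t * g (b t)) ≤ (Dl (A t * g (b t)) * A t) * C := by
        nlinarith [hgup t, h1]
      rw [hstep_eq, div_mul_eq_mul_div, le_div_iff₀ (by positivity)]
      calc Dl (A t * g (b t)) * (A t * g (b t)) * (η * Plo)
          ≤ ((Dl (A t * g (b t)) * A t) * C) * (η * Plo) := by
            apply mul_le_mul_of_nonneg_right h4 (by positivity)
        _ = ((Dl (A t * g (b t)) * A t) * C * η) * Plo := by ring
        _ ≤ ((Dl (A t * g (b t)) * A t) * C * η) * Phi0 (b t) := by
            apply mul_le_mul_of_nonneg_left (hPhige t)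
            positivity
        _ = C * (η * (Dl (A t * g (b t)) * A t) * Phi0 (b t)) := by ring
    have hDxx : Tendsto (fun t => Dl (A t * g (b t)) * (A t * g (b t))) atTop (nhds 0) := by
      apply squeeze_zero' (Filter.Eventually.of_forall hDxx0)
      · filter_upwards [Filter.eventually_ge_atTop T] with t ht
        exact hDxxle t ht
      · have := hstep.const_mul (C/(η*Plo))
        simpa using this
    -- A t * g (b t) tends to zero
    have hX0 : Tendsto (fun t => A t * g (b t)) atTop (nhds 0) := by
      rw [Metric.tendsto_atTop]
      intro m hm
      have hpos : 0 < Dl m * m := mul_pos (Dl_pos hm) hm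
      have hev : ∀ᶠ t in atTop, Dl (A t * g (b t)) * (A t * g (b t)) < Dl m * m :=
        hDxx.eventually (eventually_lt_nhds hpos)
      obtain ⟨N, hN⟩ := Filter.eventually_atTop.1 hev
      refine ⟨N, fun n hn => ?_⟩
      rw [Real.dist_eq, sub_zero]
      by_contra hcon
      push_neg at hcon
      exact absurd (Dl_mul_self_big hm hcon) (not_le.2 (hN n hn))
    -- |A t| tends to zero
    have hAabs : Tendsto (fun t => |A t|) atTop (nhds 0) := by
      have hbnd : Tendsto (fun t => |A t * g (b t)| / gstar) atTop (nhds 0) := by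
        have := (hX0.abs).div_const gstar
        simpa using this
      apply squeeze_zero' (Filter.Eventually.of_forall (fun t => abs_nonneg (A t))) _ hbnd
      filter_upwards [Filter.eventually_ge_atTop T] with t ht
      rw [le_div_iff₀ hgstar0, abs_mul, abs_of_nonneg (g_nn _)]
      exact mul_le_mul_of_nonneg_left (hglow t ht) (abs_nonneg _)
    -- quantitative expansion near the origin
    have hε'0 : 0 < ε/(8*(2+ε)) := div_pos hε (by linarith)
    have hquarter : (1:ℝ)/4 - ε/(8*(2+ε)) < 1/4 := by linarith
    have hev := Dl_div_tendsto.eventually (eventually_gt_nhds hquarter)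
    rw [eventually_nhdsWithin_iff, Metric.eventually_nhds_iff] at hev
    obtain ⟨δ', hδ'0, hball⟩ := hev
    have hsmall : ∀ᶠ t in atTop, |A t| < δ'/C :=
      hAabs.eventually (eventually_lt_nhds (div_pos hδ'0 hC0))
    obtain ⟨N1, hN1⟩ := Filter.eventually_atTop.1 hsmall
    have hT0T : T ≤ max N1 T := le_max_right _ _
    have hgrow : ∀ t, max N1 T ≤ t → (1 + ε/2) * |A t| ≤ |A (t+1)| := by
      intro t ht
      have htT : T ≤ t := le_trans hT0T ht
      have hAn := hAne t htT
      have hgt := hgpos t htT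
      have hXne : A t * g (b t) ≠ 0 := mul_ne_zero hAn hgt.ne'
      have hXsmall : |A t * g (b t)| < δ' := by
        rw [abs_mul, abs_of_nonneg (g_nn _)]
        calc |A t| * g (b t) ≤ |A t| * C :=
              mul_le_mul_of_nonneg_left (hgup t) (abs_nonneg _)
          _ < (δ'/C) * C :=
              mul_lt_mul_of_pos_right (hN1 t (le_trans (le_max_left _ _) ht)) hC0
          _ = δ' := div_mul_cancel₀ _ hC0.ne'
      have hr : 1/4 - ε/(8*(2+ε)) < Dl (A t * g (b t)) / (A t * g (b t)) := by
        apply hball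
        · rw [Real.dist_eq, sub_zero]; exact hXsmall
        · exact hXne
      have hKb : 4*(2+ε) < 2*d^2*η*(g (b t))^2 := by
        have h1 := hcond t htT
        have h3 : 2+ε < (1/2) * d ^ 2 * (g (b t)) ^ 2 * η := (div_lt_iff₀ hη0).1 h1
        nlinarith [h3]
      have hKr := growth_num hKb hr hε
      have hAe : A (t+1) = A t *
          (1 - (2*d^2*η*(g (b t))^2) * (Dl (A t * g (b t))/(A t * g (b t)))) := by
        rw [hA t, hder]
        exact expand_eq (A t) (g (b t)) d η hAn hgt.ne'
      rw [hAe, abs_mul]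
      have h5 : 1 + ε/2 ≤
          |1 - (2*d^2*η*(g (b t))^2) * (Dl (A t * g (b t))/(A t * g (b t)))| := by
        rw [abs_of_nonpos (by linarith [hKr])]
        linarith [hKr]
      nlinarith [h5, abs_nonneg (A t)]
    have hiter : ∀ n, (1 + ε/2)^n * |A (max N1 T)| ≤ |A (max N1 T + n)| := by
      intro n
      induction n with
      | zero => simp
      | succ n ih =>
        have h1 := hgrow (max N1 T + n) (Nat.le_add_right _ _)
        calc (1 + ε/2)^(n+1) * |A (max N1 T)|
            = (1 + ε/2) * ((1 + ε/2)^n * |A (max N1 T)|) := by ring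
          _ ≤ (1 + ε/2) * |A (max N1 T + n)| :=
              mul_le_mul_of_nonneg_left ih (by linarith)
          _ ≤ |A (max N1 T + n + 1)| := h1
    have hAT0 : 0 < |A (max N1 T)| := abs_pos.2 (hAne _ hT0T)
    obtain ⟨n, hn⟩ := pow_unbounded_of_one_lt ((δ'/C)/|A (max N1 T)|)
      (by linarith : (1:ℝ) < 1 + ε/2)
    have h1 := hiter n
    have h2 : |A (max N1 T + n)| < δ'/C :=
      hN1 _ (le_trans (le_max_left _ _) (Nat.le_add_right _ _))
    have h3 : (δ'/C) < (1 + ε/2)^n * |A (max N1 T)| := (div_lt_iff₀ hAT0).1 hn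
    linarith
  -- part (ii)
  have part2 : ∀ L : ℝ, Filter.Tendsto (fun t => (1/2) * d ^ 2 * (g (b t)) ^ 2)
      Filter.atTop (nhds L) → L ≤ 2 / η := by
    intro L hL
    by_contra hcon
    push_neg at hcon
    have hLη : 2 < L * η := by rw [div_lt_iff₀ hη0] at hcon; linarith
    have hε : 0 < (L*η - 2)/2 := by linarith
    have hlt : (2 + (L*η-2)/2)/η < L := by
      rw [div_lt_iff₀ hη0]
      nlinarith
    have hev := hL.eventually (eventually_gt_nhds hlt)
    obtain ⟨T, hT⟩ := Filter.eventually_atTop.1 hev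
    exact key _ hε T hT
  refine ⟨?_, part2, ?_⟩
  · intro ε hε hcond
    exact (key ε hε 0 (fun t _ => hcond t)).elim
  · intro binf hbinf
    have hgcont : Continuous g := by
      have hge : g = fun x => phi0 x + x * Phi0 x := funext hg
      rw [hge]
      exact phi0_cont.add (continuous_id.mul Phi0_cont)
    have h1 : Tendsto (fun t => g (b t)) atTop (nhds (g binf)) :=
      (hgcont.continuousAt.tendsto).comp hbinf
    have h2 : Tendsto (fun t => (1/2) * d ^ 2 * (g (b t)) ^ 2) atTop
        (nhds ((1/2) * d ^ 2 * (g binf) ^ 2)) :=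
      (h1.pow 2).const_mul ((1/2) * d ^ 2)
    have h3 := part2 _ h2
    have hP : (0:ℝ) < (8+δ)*π := by positivity
    have hs : 0 < Real.sqrt ((8+δ)*π) := Real.sqrt_pos.2 hP
    have hs2 : (Real.sqrt ((8+δ)*π))^2 = (8+δ)*π := Real.sq_sqrt hP.le
    have hgb : 0 ≤ g binf := g_nn _
    have h5 : 2/η = 2*d^2/((8+δ)*π) := by
      rw [hη, div_div_eq_mul_div]
    have h7 : (2*d^2/((8+δ)*π))*((8+δ)*π) = 2*d^2 := div_mul_cancel₀ _ hP.ne'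
    have h6 : (g binf)^2 * ((8+δ)*π) ≤ 4 := by
      rw [h5] at h3
      nlinarith [mul_le_mul_of_nonneg_right h3 hP.le, h7, mul_pos hd hd]
    rw [le_div_iff₀ hs]
    nlinarith [h6, hs2, mul_nonneg hgb hs.le, sq_nonneg (g binf)]
end
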